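/- arXiv:2508.11109 — 3 statements merged into one kernel-verified Lean document; each statement's English description precedes it below -/
import Mathlib

section
/- Let X and Y be Banach spaces with Y reflexive, and let T : X → Y' be a bounded linear operator. Then T is bijective if and only if both of the following hold: (i) whenever y ∈ Y satisfies ⟨T x, y⟩ = 0 for all x ∈ X, then y = 0; and (ii) there exists α > 0 such that sup_{y ∈ Y, y ≠ 0} ⟨T x, y⟩/‖y‖ ≥ α‖x‖ for all x ∈ X. -/
open NormedSpace

lemma bnb_sup_eq_norm {Y : Type*} [NormedAddCommGroup Y] [NormedSpace ℝ Y]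
    (f : Y →L[ℝ] ℝ) : (⨆ y : {y : Y // y ≠ 0}, f y.1 / ‖y.1‖) = ‖f‖ := by
  have bdd : BddAbove (Set.range fun y : {y : Y // y ≠ 0} => f y.1 / ‖y.1‖) := by
    refine ⟨‖f‖, ?_⟩
    rintro _ ⟨y, rfl⟩
    have hy : (0:ℝ) < ‖y.1‖ := norm_pos_iff.mpr y.2
    rw [div_le_iff₀ hy]
    calc f y.1 ≤ |f y.1| := le_abs_self _
    _ = ‖f y.1‖ := rfl
    _ ≤ ‖f‖ * ‖y.1‖ := f.le_opNorm _
  set S := ⨆ y : {y : Y // y ≠ 0}, f y.1 / ‖y.1‖ with hS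
  have hle : ∀ y : {y : Y // y ≠ 0}, f y.1 / ‖y.1‖ ≤ S := fun y => le_ciSup bdd y
  have hS0 : 0 ≤ S := by
    by_cases h : Nonempty {y : Y // y ≠ 0}
    · obtain ⟨y⟩ := h
      have h1 := hle y
      have h2 := hle ⟨-y.1, neg_ne_zero.mpr y.2⟩
      simp only [map_neg, norm_neg, neg_div] at h2
      linarith
    · haveI := not_nonempty_iff.mp h
      rw [hS, iSup_of_empty', Real.sSup_empty]
  refine le_antisymm (Real.iSup_le (fun y => ?_) (norm_nonneg f)) ?_
  · have hy : (0:ℝ) < ‖y.1‖ := norm_pos_iff.mpr y.2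
    rw [div_le_iff₀ hy]
    calc f y.1 ≤ |f y.1| := le_abs_self _
    _ = ‖f y.1‖ := rfl
    _ ≤ ‖f‖ * ‖y.1‖ := f.le_opNorm _
  · refine f.opNorm_le_bound hS0 fun y => ?_
    by_cases hy : y = 0
    · simp [hy]
    · have hypos : (0:ℝ) < ‖y‖ := norm_pos_iff.mpr hy
      have h1 := hle ⟨y, hy⟩
      have h2 := hle ⟨-y, neg_ne_zero.mpr hy⟩
      simp only [map_neg, norm_neg] at h2
      rw [div_le_iff₀ hypos] at h1
      rw [div_le_iff₀ hypos] at h2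
      rw [Real.norm_eq_abs, abs_le]
      constructor <;> simp only at h1 h2 <;> linarith

/-- Banach–Nečas–Babuška: for Banach spaces `X`, `Y` with `Y` reflexive and a
bounded linear operator `T : X → Y'`, `T` is bijective iff (i) the adjoint is injective
(`(∀ x, ⟨T x, y⟩ = 0) → y = 0`) and (ii) the inf-sup condition
`sup_{y ≠ 0} ⟨T x, y⟩/‖y‖ ≥ α ‖x‖` holds for some `α > 0`. -/
theorem banach_necas_babuska (X Y : Type*)
    [NormedAddCommGroup X] [NormedSpace ℝ X] [CompleteSpace X]
    [NormedAddCommGroup Y] [NormedSpace ℝ Y] [CompleteSpace Y]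
    (hrefl : Function.Surjective (inclusionInDoubleDual ℝ Y))
    (T : X →L[ℝ] StrongDual ℝ Y) :
    Function.Bijective T ↔
      ((∀ y : Y, (∀ x : X, T x y = 0) → y = 0) ∧
        ∃ α > (0 : ℝ), ∀ x : X,
          α * ‖x‖ ≤ ⨆ y : {y : Y // y ≠ 0}, T x y.1 / ‖y.1‖) := by
  constructor
  · intro hbij
    refine ⟨fun y hy => ?_, ?_⟩
    · refine eq_zero_of_forall_dual_eq_zero ℝ fun g => ?_
      obtain ⟨x, rfl⟩ := hbij.2 g
      exact hy x
    · obtain ⟨-, c, hc⟩ := T.bijective_iff_dense_range_and_antilipschitz.mp hbij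
      refine ⟨((c:ℝ)+1)⁻¹, by positivity, fun x => ?_⟩
      rw [bnb_sup_eq_norm]
      have hx : ‖x‖ ≤ (c:ℝ) * ‖T x‖ := by
        have := hc.le_mul_dist x 0
        simpa [dist_eq_norm] using this
      rw [inv_mul_le_iff₀ (by positivity)]
      nlinarith [norm_nonneg (T x), c.2]
  · rintro ⟨hi, α, hα, hsup⟩
    rw [T.bijective_iff_dense_range_and_antilipschitz]
    have hbound : ∀ x : X, α * ‖x‖ ≤ ‖T x‖ := fun x => by
      have := hsup x; rwa [bnb_sup_eq_norm] at this
    constructor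
    · -- dense range
      by_contra hne
      have : ∃ z, z ∉ (LinearMap.range (T : X →ₗ[ℝ] StrongDual ℝ Y)).topologicalClosure := by
        by_contra h
        push_neg at h
        exact hne (Submodule.eq_top_iff'.mpr h)
      obtain ⟨z, hz⟩ := this
      obtain ⟨Φ, u, hΦ, hu⟩ := geometric_hahn_banach_closed_point
        ((LinearMap.range (T : X →ₗ[ℝ] StrongDual ℝ Y)).topologicalClosure.convex)
        (LinearMap.range (T : X →ₗ[ℝ] StrongDual ℝ Y)).isClosed_topologicalClosure hz
      have hupos : 0 < u := by
        have := hΦ 0 (Submodule.zero_mem _)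
        simpa using this
      have hvanish : ∀ a ∈ (LinearMap.range (T : X →ₗ[ℝ] StrongDual ℝ Y)).topologicalClosure, Φ a = 0 := by
        intro a ha
        by_contra h
        have hmem : ((u+1)/Φ a) • a ∈ (LinearMap.range (T : X →ₗ[ℝ] StrongDual ℝ Y)).topologicalClosure :=
          Submodule.smul_mem _ _ ha
        have := hΦ _ hmem
        rw [map_smul, smul_eq_mul, div_mul_cancel₀ _ h] at this
        linarith
      obtain ⟨y, hy⟩ := hrefl Φ
      have hy0 : y = 0 := by
        refine hi y fun x => ?_
        have hmem : T x ∈ (LinearMap.range (T : X →ₗ[ℝ] StrongDual ℝ Y)).topologicalClosure :=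
          Submodule.le_topologicalClosure _ ⟨x, rfl⟩
        have := hvanish _ hmem
        rwa [← hy, dual_def] at this
      rw [hy0, map_zero] at hy
      have : Φ z = 0 := by rw [← hy]; rfl
      linarith
    · -- antilipschitz
      refine ⟨⟨α⁻¹, by positivity⟩, T.antilipschitz_of_bound fun x => ?_⟩
      have := hbound x
      show ‖x‖ ≤ α⁻¹ * ‖T x‖
      rw [inv_mul_eq_div, le_div_iff₀ hα, mul_comm]
      exact this
end

section
/- Let X, Y, Z be Banach spaces, A : X → Y a bounded injective linear operator, and T : X → Z a compact linear operator. Suppose there is a constant C > 0 such that ‖x‖_X ≤ C(‖A x‖_Y + ‖T x‖_Z) for all x ∈ X. Then there exists a constant c > 0 such that ‖x‖_X ≤ c ‖A x‖_Y for all x ∈ X (Peetre–Tartar lemma). -/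
/-- Peetre–Tartar lemma: if `A` is injective, `T` is compact and
`‖x‖ ≤ C(‖Ax‖ + ‖Tx‖)`, then `‖x‖ ≤ c‖Ax‖` for some `c > 0`. -/
theorem peetre_tartar (X Y Z : Type*)
    [NormedAddCommGroup X] [NormedSpace ℝ X] [CompleteSpace X]
    [NormedAddCommGroup Y] [NormedSpace ℝ Y] [CompleteSpace Y]
    [NormedAddCommGroup Z] [NormedSpace ℝ Z] [CompleteSpace Z]
    (A : X →L[ℝ] Y) (T : X →L[ℝ] Z)
    (hA : Function.Injective A) (hT : IsCompactOperator T)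
    (C : ℝ) (hC : 0 < C) (hest : ∀ x : X, ‖x‖ ≤ C * (‖A x‖ + ‖T x‖)) :
    ∃ c > (0 : ℝ), ∀ x : X, ‖x‖ ≤ c * ‖A x‖ := by
  by_contra h
  push_neg at h
  -- build a sequence of unit vectors with ‖A uₙ‖ < 1/(n+1)
  have hseq : ∀ n : ℕ, ∃ u : X, ‖u‖ = 1 ∧ ‖A u‖ < 1 / (n + 1) := by
    intro n
    obtain ⟨x, hx⟩ := h (n + 1) (by positivity)
    have hx0 : x ≠ 0 := by
      rintro rfl
      simp at hx
    have hxn : (0:ℝ) < ‖x‖ := norm_pos_iff.mpr hx0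
    have key : ‖A x‖ < ‖x‖ / (n + 1) := by
      rw [lt_div_iff₀ (by positivity)]
      nlinarith [hx]
    refine ⟨‖x‖⁻¹ • x, ?_, ?_⟩
    · rw [norm_smul, norm_inv, norm_norm, inv_mul_cancel₀ hxn.ne']
    · rw [map_smul, norm_smul, norm_inv, norm_norm]
      calc ‖x‖⁻¹ * ‖A x‖ < ‖x‖⁻¹ * (‖x‖ / (n + 1)) :=
            mul_lt_mul_of_pos_left key (inv_pos.mpr hxn)
        _ = 1 / (n + 1) := by field_simp
  choose u hu1 huA using hseq
  -- the T uₙ live in a compact set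
  obtain ⟨K, hK, hKsub⟩ :=
    (hT.image_closedBall_subset_compact (𝕜₁ := ℝ) (f := (T : X →ₗ[ℝ] Z)) 1 :
      ∃ K : Set Z, IsCompact K ∧ T '' Metric.closedBall 0 1 ⊆ K)
  have hmem : ∀ n, T (u n) ∈ K := fun n =>
    hKsub ⟨u n, by simp [Metric.mem_closedBall, dist_zero_right, (hu1 n).le], rfl⟩
  obtain ⟨z, -, φ, hφ, hTlim⟩ := hK.tendsto_subseq hmem
  set v : ℕ → X := fun n => u (φ n) with hv
  -- A (v n) → 0
  have hAlim : Filter.Tendsto (fun n => A (v n)) Filter.atTop (nhds 0) := by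
    rw [tendsto_zero_iff_norm_tendsto_zero]
    have hb : Filter.Tendsto (fun n : ℕ => 1 / ((n : ℝ) + 1)) Filter.atTop (nhds 0) :=
      tendsto_one_div_add_atTop_nhds_zero_nat
    refine squeeze_zero (fun n => norm_nonneg _) (fun n => ?_) hb
    calc ‖A (v n)‖ ≤ 1 / ((φ n : ℝ) + 1) := (huA (φ n)).le
      _ ≤ 1 / ((n : ℝ) + 1) := by
          apply one_div_le_one_div_of_le (by positivity)
          have h3 : (n:ℝ) ≤ (φ n : ℝ) := Nat.cast_le.mpr (hφ.id_le n)
          linarith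
  -- v is Cauchy
  have hw : CauchySeq (fun n => (A (v n), T (v n)) : ℕ → Y × Z) :=
    ((hAlim.prodMk_nhds hTlim).comp Filter.tendsto_id).cauchySeq
  have hcauchy : CauchySeq v := by
    rw [Metric.cauchySeq_iff]
    intro ε hε
    obtain ⟨N, hN⟩ := Metric.cauchySeq_iff.mp hw (ε / (2 * C + 1)) (by positivity)
    refine ⟨N, fun m hm n hn => ?_⟩
    have h1 := hN m hm n hn
    rw [Prod.dist_eq] at h1
    have hAd : ‖A (v m) - A (v n)‖ < ε / (2 * C + 1) := by
      rw [← dist_eq_norm]; exact lt_of_le_of_lt (le_max_left _ _) h1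
    have hTd : ‖T (v m) - T (v n)‖ < ε / (2 * C + 1) := by
      rw [← dist_eq_norm]; exact lt_of_le_of_lt (le_max_right _ _) h1
    have h2 := hest (v m - v n)
    rw [map_sub, map_sub] at h2
    rw [dist_eq_norm]
    have : ε / (2 * C + 1) * (2 * C) < ε := by
      rw [div_mul_eq_mul_div, div_lt_iff₀ (by positivity)]
      nlinarith
    nlinarith [norm_nonneg (A (v m) - A (v n)), norm_nonneg (T (v m) - T (v n))]
  obtain ⟨x, hx⟩ := cauchySeq_tendsto_of_complete hcauchy
  -- ‖x‖ = 1
  have hnx : ‖x‖ = 1 := by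
    have h1 : Filter.Tendsto (fun n => ‖v n‖) Filter.atTop (nhds ‖x‖) :=
      hx.norm
    have h2 : (fun n => ‖v n‖) = fun _ => (1:ℝ) := funext fun n => hu1 (φ n)
    rw [h2] at h1
    exact (tendsto_nhds_unique h1 tendsto_const_nhds)
  -- A x = 0
  have hAx : A x = 0 := by
    have h1 : Filter.Tendsto (fun n => A (v n)) Filter.atTop (nhds (A x)) :=
      (A.continuous.tendsto x).comp hx
    exact tendsto_nhds_unique h1 hAlim
  have : x = 0 := hA (by simpa using hAx)
  rw [this, norm_zero] at hnx
  norm_num at hnx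
end

section
/- Let d ≥ 4 and define a sequence of real numbers by q₀ ∈ (d/3, d/2) and q_{n+1} := d·q_n/(2d − 3 q_n) as long as q_n < d/2. Then the sequence (q_n) is strictly increasing and there exists N ∈ ℕ with q_N ≥ d/2. -/
/-- for `d ≥ 4` and `q₀ ∈ (d/3, d/2)`, the iteration
`q_{n+1} = d q_n/(2d - 3 q_n)` (applied as long as `q_n < d/2`) is strictly increasing
and reaches `d/2` in finitely many steps. -/
theorem sobolev_iteration_terminates (d : ℝ) (hd : 4 ≤ d) (q : ℕ → ℝ)
    (hq0l : d / 3 < q 0) (hq0u : q 0 < d / 2)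
    (hrec : ∀ n, q n < d / 2 → q (n + 1) = d * q n / (2 * d - 3 * q n)) :
    (∀ n, (∀ m ≤ n, q m < d / 2) → q n < q (n + 1)) ∧ ∃ N, d / 2 ≤ q N := by
  have hd0 : (0:ℝ) < d := by linarith
  have key : ∀ n, d / 3 < q n → q n < d / 2 → q n < q (n + 1) := by
    intro n hl hu
    have hden : 0 < 2 * d - 3 * q n := by linarith
    rw [hrec n hu, lt_div_iff₀ hden]
    nlinarith
  have lower : ∀ n, (∀ m ≤ n, q m < d / 2) → d / 3 < q n := by
    intro n
    induction n with
    | zero => intro _; exact hq0l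
    | succ k ih =>
      intro h
      have ih' := ih (fun m hm => h m (hm.trans (Nat.le_succ k)))
      have := key k ih' (h k (Nat.le_succ k))
      linarith
  constructor
  · intro n h
    exact key n (lower n h) (h n le_rfl)
  · by_contra hc
    push_neg at hc
    have hall : ∀ n, q n < d / 2 := fun n => hc n
    have low : ∀ n, d / 3 < q n := fun n => lower n (fun m _ => hall m)
    have mono : ∀ n, q 0 ≤ q n := by
      intro n
      induction n with
      | zero => exact le_rfl
      | succ k ih =>
        have := key k (low k) (hall k)
        linarith
    set c : ℝ := q 0 * (3 * q 0 - d) / d with hc_def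
    have hcpos : 0 < c := by
      apply div_pos _ hd0
      have h1 : 0 < q 0 := by linarith
      nlinarith
    have grow : ∀ n : ℕ, q 0 + n * c ≤ q n := by
      intro n
      induction n with
      | zero => simp
      | succ k ih =>
        have hl := low k
        have hu := hall k
        have hden : 0 < 2 * d - 3 * q k := by linarith
        have hdenle : 2 * d - 3 * q k ≤ d := by linarith
        have hq0pos : 0 < q 0 := by linarith
        have hqk : q 0 ≤ q k := mono k
        have step : q k + c ≤ q (k + 1) := by
          rw [hrec k hu, hc_def, le_div_iff₀ hden]
          have h1 : 0 ≤ q 0 * (3 * q 0 - d) := by nlinarith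
          have h2 : q 0 * (3 * q 0 - d) * (2 * d - 3 * q k) ≤ q 0 * (3 * q 0 - d) * d :=
            mul_le_mul_of_nonneg_left hdenle h1
          have h3 : q 0 * (3 * q 0 - d) ≤ q k * (3 * q k - d) := by nlinarith
          have h4 : q 0 * (3 * q 0 - d) / d * (2 * d - 3 * q k) ≤ q k * (3 * q k - d) := by
            rw [div_mul_eq_mul_div, div_le_iff₀ hd0]
            nlinarith
          nlinarith [h4]
        push_cast
        nlinarith
    obtain ⟨N, hN⟩ := exists_nat_ge ((d / 2 - q 0) / c)
    have := grow N
    have hNc : d / 2 - q 0 ≤ N * c := by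
      rw [div_le_iff₀ hcpos] at hN
      linarith
    exact absurd (hall N) (by linarith)
end
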